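/- Let K be a field of characteristic zero, h an integer, q a nonzero element of K with q^h ≠ −1, and y_1, y_2 ∈ K. Then for every n ≥ 0, Σ_{m=0}^{n} C(n,m) E_{m,q}^{(h,2)}(y_1) y_2^{n−m} = Σ_{l_1,l_2 ≥ 0, l_1+l_2 = n} (n choose l_1,l_2) · E_{l_1,q}^{(h)}(y_1) · E_{l_2,q}^{(h)}(y_2), where C(n,m) is the binomial coefficient, (n choose l_1,l_2) = n!/(l_1! l_2!), E_{m,q}^{(h,2)}(z) denotes the second-order (h,q)-Euler polynomial, and E_{l,q}^{(h)}(x) the (first-order) (h,q)-Euler polynomial. -/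

import Mathlib

/-!
Both sides are `n!` times the `n`-th coefficient of a product of exponential generating
functions. Multiplied by `(q^h e^t + 1)²`, the product `(∑ E^{(h,2)}_m(y₁) t^m/m!) · e^{y₂t}` and
the product `(∑ E^{(h)}_l(y₁) t^l/l!) · (∑ E^{(h)}_l(y₂) t^l/l!)` both become `4 e^{(y₁+y₂)t}`;
since `K⟦X⟧` is a domain and `q^h e^t + 1` divides `2 e^{y₁t} ≠ 0`, the two products are equal.
-/

open Finset PowerSeries

theorem Nat.multinomial_univ_two_eq_choose (a b : ℕ) :
    Nat.multinomial univ ![a, b] = (a + b).choose a := by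
  rw [Nat.multinomial_univ_two, ← Nat.add_choose, Nat.choose_symm_add]

section egf

variable {K : Type*} [Field K]

noncomputable def egf (a : ℕ → K) : K⟦X⟧ :=
  mk fun n => a n / n.factorial

theorem egf_pow_ne_zero (x : K) : egf (x ^ ·) ≠ 0 := fun h => by
  simpa [egf] using congrArg (coeff 0) h

theorem factorial_mul_coeff_egf_mul [CharZero K] (a b : ℕ → K) (n : ℕ) :
    n.factorial * coeff n (egf a * egf b) =
      ∑ p ∈ antidiagonal n, (n.choose p.1 : K) * a p.1 * b p.2 := by
  rw [coeff_mul, mul_sum]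
  refine sum_congr rfl fun p hp => ?_
  obtain rfl := mem_antidiagonal.1 hp
  simp only [Nat.cast_add_choose, egf, coeff_mk]
  field_simp

end egf

theorem mul_eq_mul_of_sq_mul_eq {R : Type*} [CommRing R] [IsDomain R] {A c F₁ F₂ G₁ G₂ H : R}
    (hc : c ≠ 0) (hG₁ : G₁ ≠ 0) (h₁ : A * F₁ = c * G₁) (h₂ : A * F₂ = c * G₂)
    (hH : A ^ 2 * H = c ^ 2 * G₁) : H * G₂ = F₁ * F₂ := by
  have hA : A ≠ 0 := by
    rintro rfl
    exact mul_ne_zero hc hG₁ (by rw [← h₁, zero_mul])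
  apply mul_left_cancel₀ (pow_ne_zero 2 hA)
  linear_combination G₂ * hH - A * F₂ * h₁ - c * G₁ * h₂

theorem second_order_hq_euler_identity_general (K : Type*) [Field K] [CharZero K]
    (h : ℤ) (q : K) (y₁ y₂ : K)
    (E₁ E₂ : K → ℕ → K)
    (hE₁ : ∀ x : K,
      (PowerSeries.C (R := K) (q ^ h) * PowerSeries.exp K + 1) *
          PowerSeries.mk (fun n => E₁ x n / n.factorial)
        = PowerSeries.C (R := K) 2 * PowerSeries.mk (fun n => x ^ n / n.factorial))
    (hE₂ : ∀ z : K,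
      (PowerSeries.C (R := K) (q ^ h) * PowerSeries.exp K + 1) ^ 2 *
          PowerSeries.mk (fun n => E₂ z n / n.factorial)
        = PowerSeries.C (R := K) 4 * PowerSeries.mk (fun n => z ^ n / n.factorial)) :
    ∀ n : ℕ,
      (∑ m ∈ Finset.range (n + 1), (n.choose m : K) * E₂ y₁ m * y₂ ^ (n - m))
        = ∑ l ∈ Finset.HasAntidiagonal.antidiagonal n,
            (Nat.multinomial Finset.univ ![l.1, l.2] : K) * E₁ y₁ l.1 * E₁ y₂ l.2 := by
  intro n
  have hC : (C (2 : K)) ^ 2 = C 4 := by rw [← map_pow]; norm_num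
  have key : egf (E₂ y₁) * egf (y₂ ^ ·) = egf (E₁ y₁) * egf (E₁ y₂) :=
    mul_eq_mul_of_sq_mul_eq ((map_ne_zero_iff _ C_injective).2 two_ne_zero) (egf_pow_ne_zero y₁) (hE₁ y₁) (hE₁ y₂)
      (by rw [hC]; exact hE₂ y₁)
  calc (∑ m ∈ range (n + 1), (n.choose m : K) * E₂ y₁ m * y₂ ^ (n - m))
      = n.factorial * coeff n (egf (E₂ y₁) * egf (y₂ ^ ·)) := by
        rw [factorial_mul_coeff_egf_mul, Nat.sum_antidiagonal_eq_sum_range_succ_mk]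
    _ = n.factorial * coeff n (egf (E₁ y₁) * egf (E₁ y₂)) := by rw [key]
    _ = _ := by
        rw [factorial_mul_coeff_egf_mul]
        refine sum_congr rfl fun l hl => ?_
        rw [Nat.multinomial_univ_two_eq_choose, mem_antidiagonal.1 hl]

/-- Over a field `K` of characteristic zero, with `q ≠ 0` and `q^h ≠ -1`, let `E₁ x`
be the `(h,q)`-Euler polynomials (EGF via `(q^h e^t + 1) · Σ_n E₁ x n t^n/n! = 2 e^{tx}`)
and `E₂ z` the second-order `(h,q)`-Euler polynomials (EGF via
`(q^h e^t + 1)² · Σ_n E₂ z n t^n/n! = 4 e^{tz}`). Then for `y₁, y₂ ∈ K`,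
`Σ_{m≤n} C(n,m) E₂ y₁ m y₂^{n-m} = Σ_{l₁+l₂=n} (n choose l₁,l₂) E₁ y₁ l₁ E₁ y₂ l₂`. -/
theorem second_order_hq_euler_identity (K : Type*) [Field K] [CharZero K]
    (h : ℤ) (q : K) (hq : q ≠ 0) (hqh : q ^ h ≠ -1) (y₁ y₂ : K)
    (E₁ E₂ : K → ℕ → K)
    (hE₁ : ∀ x : K,
      (PowerSeries.C (R := K) (q ^ h) * PowerSeries.exp K + 1) *
          PowerSeries.mk (fun n => E₁ x n / n.factorial)
        = PowerSeries.C (R := K) 2 * PowerSeries.mk (fun n => x ^ n / n.factorial))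
    (hE₂ : ∀ z : K,
      (PowerSeries.C (R := K) (q ^ h) * PowerSeries.exp K + 1) ^ 2 *
          PowerSeries.mk (fun n => E₂ z n / n.factorial)
        = PowerSeries.C (R := K) 4 * PowerSeries.mk (fun n => z ^ n / n.factorial)) :
    ∀ n : ℕ,
      (∑ m ∈ Finset.range (n + 1), (n.choose m : K) * E₂ y₁ m * y₂ ^ (n - m))
        = ∑ l ∈ Finset.HasAntidiagonal.antidiagonal n,
            (Nat.multinomial Finset.univ ![l.1, l.2] : K) * E₁ y₁ l.1 * E₁ y₂ l.2 :=
  second_order_hq_euler_identity_general K h q y₁ y₂ E₁ E₂ hE₁ hE₂
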